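/- arXiv:0903.4571 — 3 statements merged into one kernel-verified Lean document; each statement's English description precedes it below -/
import Mathlib

section
/- If S is symmetric positive definite, then for every τ in the upper half plane 𝔥 the bilinear form H(α, β) := E(α, β·J_τ⁻¹) = E(α, −β·J_τ) on M_{g×2}(ℝ) is symmetric and positive definite (the Riemann positivity condition for the polarized complex torus ℂ^g/Λ_τ). -/
open Matrix

/-- The real `2×2` matrix `J₂ = [[0,1],[−1,0]]`. -/
def J2 : Matrix (Fin 2) (Fin 2) ℝ := !![0, 1; -1, 0]

/-- The bilinear form `E(α,β) = tr(αᵗ·S·β·J₂)` on the space of real `g×2` matrices. -/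
def Eform {g : ℕ} (S : Matrix (Fin g) (Fin g) ℝ) (α β : Matrix (Fin g) (Fin 2) ℝ) : ℝ :=
  (αᵀ * S * β * J2).trace

/-- For `τ` in the upper half plane (with `x = Re τ`, `y = Im τ`), the real `2×2` matrix
`J_τ = (1/y) · [[−x, x²+y²],[−1, x]]`; note `J_τ⁻¹ = −J_τ`. -/
noncomputable def Jmat (τ : ℂ) : Matrix (Fin 2) (Fin 2) ℝ :=
  (τ.im)⁻¹ • !![-τ.re, τ.re ^ 2 + τ.im ^ 2; -1, τ.re]

/-!
With `P = periodMat τ` one has `J_τ⁻¹ · J₂ = y⁻¹ · P Pᵀ`, so cycling the trace gives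
`H(α, β) = y⁻¹ · tr((αP)ᵀ S (βP))`. This is symmetric because `S` is, and positive for
`α ≠ 0` because `P` is invertible (`det P = -y`) and `S` is positive definite.
-/

namespace Matrix

variable {m n R : Type*} [Fintype n]

lemma conjTranspose_mul_mul_apply_self [Ring R] [StarRing R] (A : Matrix n n R)
    (B : Matrix n m R) (j : m) :
    (Bᴴ * A * B) j j = star (fun i ↦ B i j) ⬝ᵥ A *ᵥ fun i ↦ B i j := by
  rw [Matrix.mul_assoc, mul_apply']
  rfl

lemma PosDef.trace_conjTranspose_mul_mul_pos [Fintype m] [Ring R] [PartialOrder R] [StarRing R]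
    [IsOrderedCancelAddMonoid R] {A : Matrix n n R} (hA : A.PosDef) {B : Matrix n m R}
    (hB : B ≠ 0) : 0 < (Bᴴ * A * B).trace := by
  obtain ⟨i, j, hij⟩ : ∃ i j, B i j ≠ 0 := by
    by_contra! h
    exact hB (ext h)
  refine Finset.sum_pos' (fun k _ ↦ (hA.posSemidef.conjTranspose_mul_mul_same B).diag_nonneg)
    ⟨j, Finset.mem_univ j, ?_⟩
  rw [diag_apply, conjTranspose_mul_mul_apply_self]
  exact hA.dotProduct_mulVec_pos fun h ↦ hij (congrFun h i)

lemma IsSymm.trace_transpose_mul_mul_comm [Fintype m] [CommRing R] {A : Matrix n n R}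
    (hA : A.IsSymm) (B C : Matrix n m R) : (Bᵀ * A * C).trace = (Cᵀ * A * B).trace := by
  rw [← trace_transpose, transpose_mul, transpose_mul, transpose_transpose, hA.eq,
    Matrix.mul_assoc]

end Matrix

/-- The rows are the real coordinates `(Re, Im)` of the lattice basis `τ, 1`. -/
def periodMat (τ : ℂ) : Matrix (Fin 2) (Fin 2) ℝ := !![τ.re, τ.im; 1, 0]

lemma det_periodMat (τ : ℂ) : (periodMat τ).det = -τ.im := by
  simp [periodMat, det_fin_two_of]

lemma Jmat_inv {τ : ℂ} (hτ : τ.im ≠ 0) : (Jmat τ)⁻¹ = -Jmat τ := by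
  refine inv_eq_right_inv ?_
  ext i j
  fin_cases i <;> fin_cases j <;>
    simp [Jmat, mul_apply, Fin.sum_univ_two, one_apply] <;> field_simp <;> ring

lemma neg_Jmat_mul_J2 (τ : ℂ) :
    -Jmat τ * J2 = τ.im⁻¹ • (periodMat τ * (periodMat τ)ᵀ) := by
  ext i j
  fin_cases i <;> fin_cases j <;>
    simp [Jmat, J2, periodMat, mul_apply, Fin.sum_univ_two, vecMul, dotProduct, sq]

lemma Eform_mul_Jmat_inv {g : ℕ} {τ : ℂ} (hτ : τ.im ≠ 0) (S : Matrix (Fin g) (Fin g) ℝ)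
    (α β : Matrix (Fin g) (Fin 2) ℝ) :
    Eform S α (β * (Jmat τ)⁻¹) =
      τ.im⁻¹ * ((α * periodMat τ)ᵀ * S * (β * periodMat τ)).trace := by
  set P := periodMat τ
  calc Eform S α (β * (Jmat τ)⁻¹) = (αᵀ * S * β * (-Jmat τ * J2)).trace := by
        simp only [Eform, Jmat_inv hτ, Matrix.mul_assoc]
    _ = τ.im⁻¹ * ((αᵀ * S * β * P) * Pᵀ).trace := by
        rw [neg_Jmat_mul_J2, Matrix.mul_smul, trace_smul, smul_eq_mul, Matrix.mul_assoc _ P]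
    _ = τ.im⁻¹ * ((α * P)ᵀ * S * (β * P)).trace := by
        rw [trace_mul_comm]
        simp only [transpose_mul, Matrix.mul_assoc]

theorem stmt_7_general {g : ℕ} (S : Matrix (Fin g) (Fin g) ℝ) (hS : S.PosDef)
    (τ : ℂ) (hτ : 0 < τ.im) :
    (∀ α β : Matrix (Fin g) (Fin 2) ℝ,
      Eform S α (β * (Jmat τ)⁻¹) = Eform S β (α * (Jmat τ)⁻¹)) ∧
    (∀ α : Matrix (Fin g) (Fin 2) ℝ, α ≠ 0 → 0 < Eform S α (α * (Jmat τ)⁻¹)) := by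
  refine ⟨fun α β ↦ ?_, fun α hα ↦ ?_⟩
  · rw [Eform_mul_Jmat_inv hτ.ne', Eform_mul_Jmat_inv hτ.ne',
      (isHermitian_iff_isSymm.mp hS.isHermitian).trace_transpose_mul_mul_comm]
  · have : Invertible (periodMat τ) :=
      invertibleOfIsUnitDet _ (by simpa [det_periodMat] using hτ.ne')
    have hαP : α * periodMat τ ≠ 0 := fun h ↦
      hα (mul_left_injective_of_invertible (periodMat τ) (by simpa using h))
    rw [Eform_mul_Jmat_inv hτ.ne']
    exact mul_pos (inv_pos.2 hτ) (by simpa using hS.trace_conjTranspose_mul_mul_pos hαP)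

/-- If `S` is symmetric positive definite, then for every `τ ∈ 𝔥` the bilinear form
`H(α,β) := E(α, β·J_τ⁻¹)` on `M_{g×2}(ℝ)` is symmetric and positive definite
(the Riemann positivity condition for the polarized complex torus `ℂ^g/Λ_τ`). -/
theorem stmt_7 {g : ℕ} (hg : 1 ≤ g) (S : Matrix (Fin g) (Fin g) ℝ) (hS : S.PosDef)
    (τ : ℂ) (hτ : 0 < τ.im) :
    (∀ α β : Matrix (Fin g) (Fin 2) ℝ,
      Eform S α (β * (Jmat τ)⁻¹) = Eform S β (α * (Jmat τ)⁻¹)) ∧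
    (∀ α : Matrix (Fin g) (Fin 2) ℝ, α ≠ 0 → 0 < Eform S α (α * (Jmat τ)⁻¹)) :=
  stmt_7_general S hS τ hτ
end

section
/- For all γ, γ' ∈ Γ, all λ, λ' ∈ M_{g×2}(ℝ), and all (z, τ) ∈ ℂ^g × 𝔥, one has act(γ,λ)(act(γ',λ')(z,τ)) = act(γ·γ', λ' + ρ(γ')⁻¹·λ·γ')(z,τ); i.e. the maps act(γ,λ) define a group action of the semidirect product M_{g×2}(ℝ) ⋊ Γ on ℂ^g × 𝔥. -/
open Matrix

/-- The underlying `2×2` real matrix of an element of `SL₂(ℝ)`. -/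
def SLmat (γ : Matrix.SpecialLinearGroup (Fin 2) ℝ) : Matrix (Fin 2) (Fin 2) ℝ := γ

/-- The underlying matrix of an element of `GL_g(ℝ)`. -/
def GLmat {g : ℕ} (A : GL (Fin g) ℝ) : Matrix (Fin g) (Fin g) ℝ := A

/-- The Möbius transform `γ·τ = (aτ+b)/(cτ+d)` of `τ` by the real matrix
`γ = [[a,b],[c,d]]`. -/
noncomputable def moebius (γ : Matrix (Fin 2) (Fin 2) ℝ) (τ : ℂ) : ℂ :=
  ((γ 0 0 : ℂ) * τ + (γ 0 1 : ℂ)) / ((γ 1 0 : ℂ) * τ + (γ 1 1 : ℂ))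

/-- The map `act(γ,λ)(z,τ) = ((1/(cτ+d))·ρ(γ)·(z + λ·(τ,1)ᵗ), γ·τ)` on `ℂ^g × 𝔥`
(here `R = ρ(γ)`). -/
noncomputable def act {g : ℕ} (γ : Matrix (Fin 2) (Fin 2) ℝ)
    (R : Matrix (Fin g) (Fin g) ℝ) (l : Matrix (Fin g) (Fin 2) ℝ)
    (p : (Fin g → ℂ) × ℂ) : (Fin g → ℂ) × ℂ :=
  (((γ 1 0 : ℂ) * p.2 + (γ 1 1 : ℂ))⁻¹ •
      (R.map ((↑) : ℝ → ℂ) *ᵥ (p.1 + l.map ((↑) : ℝ → ℂ) *ᵥ ![p.2, 1])),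
    moebius γ p.2)

/-! The factor of automorphy `j(γ, τ) = cτ + d` satisfies the cocycle relation
`j(γγ', τ) = j(γ, γ'τ) j(γ', τ)` and homogenises the Möbius action:
`(γτ, 1) = j(γ, τ)⁻¹ γ (τ, 1)`. Hence the translation `λ (γ'τ, 1)` applied after `act(γ', λ')`
equals `j(γ', τ)⁻¹ λ γ' (τ, 1)`, and moving it past `ρ(γ')` turns it into `ρ(γ')⁻¹ λ γ'`. -/

noncomputable def denom (M : Matrix (Fin 2) (Fin 2) ℝ) (τ : ℂ) : ℂ :=
  (M 1 0 : ℂ) * τ + (M 1 1 : ℂ)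

theorem denom_ne_zero_of_det_ne_zero {M : Matrix (Fin 2) (Fin 2) ℝ} (hM : M.det ≠ 0) {τ : ℂ}
    (hτ : τ.im ≠ 0) : denom M τ ≠ 0 := by
  intro h
  have hc : M 1 0 = 0 := by
    simpa [denom, hτ] using congrArg Complex.im h
  have hd : M 1 1 = 0 := by
    simpa [denom, hc] using h
  simp [Matrix.det_fin_two, hc, hd] at hM

theorem denom_mul (A B : Matrix (Fin 2) (Fin 2) ℝ) {τ : ℂ} (hB : denom B τ ≠ 0) :
    denom (A * B) τ = denom A (moebius B τ) * denom B τ := by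
  unfold denom moebius at *
  simp only [Matrix.mul_apply, Fin.sum_univ_two]
  push_cast
  field_simp
  ring

theorem moebius_mul (A B : Matrix (Fin 2) (Fin 2) ℝ) {τ : ℂ} (hB : denom B τ ≠ 0)
    (hAB : denom (A * B) τ ≠ 0) : moebius (A * B) τ = moebius A (moebius B τ) := by
  have hA : denom A (moebius B τ) ≠ 0 := left_ne_zero_of_mul (denom_mul A B hB ▸ hAB)
  unfold denom moebius at *
  simp only [Matrix.mul_apply, Fin.sum_univ_two] at *
  push_cast at *
  field_simp
  ring

theorem vec_moebius_eq_inv_denom_smul (M : Matrix (Fin 2) (Fin 2) ℝ) {τ : ℂ}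
    (hM : denom M τ ≠ 0) :
    ![moebius M τ, 1] = (denom M τ)⁻¹ • (M.map ((↑) : ℝ → ℂ) *ᵥ ![τ, 1]) := by
  ext i
  fin_cases i <;> simp [moebius, denom] at * <;> field_simp

theorem mulVec_add_mul_mul_mulVec_of_mul_eq_one {α m n k : Type*} [Ring α] [Fintype m]
    [DecidableEq m] [Fintype n] [Fintype k] {R S : Matrix m m α} (hS : R * S = 1) (L : Matrix m n α)
    (L' : Matrix m k α) (B : Matrix n k α) (z : m → α) (v : k → α) :
    R *ᵥ (z + (L' + S * L * B) *ᵥ v) = R *ᵥ (z + L' *ᵥ v) + L *ᵥ (B *ᵥ v) := by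
  rw [add_mulVec, ← add_assoc, mulVec_add, mulVec_mulVec, Matrix.mul_assoc,
    ← Matrix.mul_assoc R, hS, Matrix.one_mul, mulVec_mulVec]

theorem map_ofReal_mul {m n k : Type*} [Fintype n] (M : Matrix m n ℝ) (N : Matrix n k ℝ) :
    (M * N).map ((↑) : ℝ → ℂ) = M.map ((↑) : ℝ → ℂ) * N.map ((↑) : ℝ → ℂ) :=
  Matrix.map_mul (f := Complex.ofRealHom)

theorem act_act {g : ℕ} (A B : Matrix (Fin 2) (Fin 2) ℝ) {RA RB S : Matrix (Fin g) (Fin g) ℝ}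
    (hS : RB * S = 1) (l l' : Matrix (Fin g) (Fin 2) ℝ) (z : Fin g → ℂ) {τ : ℂ}
    (hB : denom B τ ≠ 0) (hAB : denom (A * B) τ ≠ 0) :
    act A RA l (act B RB l' (z, τ)) = act (A * B) (RA * RB) (l' + S * l * B) (z, τ) := by
  have hSℂ : RB.map ((↑) : ℝ → ℂ) * S.map ((↑) : ℝ → ℂ) = 1 := by
    rw [← map_ofReal_mul, hS]
    exact Matrix.map_one _ Complex.ofReal_zero Complex.ofReal_one
  refine Prod.ext ?_ (moebius_mul A B hB hAB).symm
  simp only [act, ← denom.eq_1]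
  rw [vec_moebius_eq_inv_denom_smul B hB, mulVec_smul, ← smul_add, mulVec_smul, smul_smul,
    ← mul_inv, ← denom_mul A B hB, map_ofReal_mul, ← mulVec_mulVec,
    Matrix.map_add _ Complex.ofReal_add, map_ofReal_mul,
    map_ofReal_mul, mulVec_add_mul_mul_mulVec_of_mul_eq_one hSℂ]

theorem stmt_9_general {g : ℕ}
    (Γ : Subgroup (Matrix.SpecialLinearGroup (Fin 2) ℝ))
    (ρ : Γ →* GL (Fin g) ℝ) :
    ∀ (γ γ' : Γ) (l l' : Matrix (Fin g) (Fin 2) ℝ) (z : Fin g → ℂ) (τ : ℂ),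
      0 < τ.im →
      act (SLmat ↑γ) (GLmat (ρ γ)) l (act (SLmat ↑γ') (GLmat (ρ γ')) l' (z, τ)) =
        act (SLmat ↑(γ * γ')) (GLmat (ρ (γ * γ')))
          (l' + GLmat ((ρ γ')⁻¹) * l * SLmat ↑γ') (z, τ) := by
  intro γ γ' l l' z τ hτ
  have hden (δ : Γ) : denom (SLmat δ) τ ≠ 0 :=
    denom_ne_zero_of_det_ne_zero (by simp [SLmat]) hτ.ne'
  have hGL : GLmat (ρ (γ * γ')) = GLmat (ρ γ) * GLmat (ρ γ') := by simp [GLmat]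
  have hinv : GLmat (ρ γ') * GLmat (ρ γ')⁻¹ = 1 := by simp [GLmat]
  rw [hGL]
  exact act_act _ _ hinv l l' z (hden γ') (hden (γ * γ'))

/-- For all `γ, γ' ∈ Γ`, all real `g×2` matrices `λ, λ'`, and all `(z,τ) ∈ ℂ^g × 𝔥`,
`act(γ,λ)(act(γ',λ')(z,τ)) = act(γ·γ', λ' + ρ(γ')⁻¹·λ·γ')(z,τ)`; i.e. the maps
`act(γ,λ)` define a group action of the semidirect product `M_{g×2}(ℝ) ⋊ Γ` on
`ℂ^g × 𝔥`. -/
theorem stmt_9 {g : ℕ} (hg : 1 ≤ g)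
    (Γ : Subgroup (Matrix.SpecialLinearGroup (Fin 2) ℝ))
    (ρ : Γ →* GL (Fin g) ℝ) :
    ∀ (γ γ' : Γ) (l l' : Matrix (Fin g) (Fin 2) ℝ) (z : Fin g → ℂ) (τ : ℂ),
      0 < τ.im →
      act (SLmat ↑γ) (GLmat (ρ γ)) l (act (SLmat ↑γ') (GLmat (ρ γ')) l' (z, τ)) =
        act (SLmat ↑(γ * γ')) (GLmat (ρ (γ * γ')))
          (l' + GLmat ((ρ γ')⁻¹) * l * SLmat ↑γ') (z, τ) :=
  stmt_9_general Γ ρ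
end

section
/- Set S := J₂·φ(j) = [[1, 0],[0, −b]]. Then S is symmetric positive definite, and the symplectic form E(α,β) := tr(αᵗ·S·β·J₂) on M₂(ℝ) takes only rational values on the image of B: for all q, r ∈ B one has E(φ(q), φ(r)) = tr(φ(j·q·r̄)) ∈ ℚ, where r̄ denotes the quaternion conjugate of r. -/
/-!
`φ` is the algebra homomorphism attached to a quaternion basis of `M₂(ℝ)`, and it sends
conjugation to the adjugate. For every `2×2` matrix `M` one has `J₂ Mᵀ = adj(M) J₂`, so
transposing inside the trace and using that `S = J₂ φ(j)` is symmetric gives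
`E(φ q, φ r) = tr(adj(φ r) φ(j) φ(q)) = tr φ(r̄ j q) = tr φ(j q r̄)`,
which is rational because `tr φ(x) = 2 re x`.
-/

open Matrix Quaternion

/-- The ℚ-linear map `φ : B = (a,b | ℚ) → M₂(ℝ)` with `φ(1) = I₂`,
`φ(i) = [[√a, 0],[0, −√a]]`, `φ(j) = [[0, b],[1, 0]]`,
`φ(k) = [[0, b√a],[−√a, 0]]`. -/
noncomputable def phi (a b : ℚ) (q : ℍ[ℚ, a, b]) : Matrix (Fin 2) (Fin 2) ℝ :=
  (q.re : ℝ) • (1 : Matrix (Fin 2) (Fin 2) ℝ) +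
    (q.imI : ℝ) • !![Real.sqrt a, 0; 0, -Real.sqrt a] +
    (q.imJ : ℝ) • !![0, (b : ℝ); 1, 0] +
    (q.imK : ℝ) • !![0, (b : ℝ) * Real.sqrt a; -Real.sqrt a, 0]

/-- The quaternion `j ∈ B = (a,b | ℚ)`. -/
def quatJ (a b : ℚ) : ℍ[ℚ, a, b] := ⟨0, 0, 1, 0⟩

theorem J2_mul_transpose (M : Matrix (Fin 2) (Fin 2) ℝ) : J2 * Mᵀ = M.adjugate * J2 := by
  ext i j; fin_cases i <;> fin_cases j <;>
    simp [J2, adjugate_fin_two, vecMul, dotProduct, Fin.sum_univ_two]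

theorem J2_transpose : J2ᵀ = -J2 := by
  ext i j; fin_cases i <;> fin_cases j <;> simp [J2]

theorem J2_mul_J2 : J2 * J2 = -1 := by
  ext i j; fin_cases i <;> fin_cases j <;> simp [J2]

theorem trace_transpose_mul_J2_mul_mul_J2 {M N P : Matrix (Fin 2) (Fin 2) ℝ}
    (hS : (J2 * P)ᵀ = J2 * P) :
    (Mᵀ * (J2 * P) * N * J2).trace = (N.adjugate * P * M).trace := by
  calc (Mᵀ * (J2 * P) * N * J2).trace
      = (J2ᵀ * Nᵀ * (J2 * P) * M).trace := by
        rw [← trace_transpose, transpose_mul, transpose_mul, transpose_mul, transpose_transpose, hS]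
        simp only [Matrix.mul_assoc]
    _ = -(N.adjugate * (J2 * J2) * P * M).trace := by
        rw [J2_transpose, neg_mul, J2_mul_transpose]
        simp [Matrix.mul_assoc]
    _ = (N.adjugate * P * M).trace := by simp [J2_mul_J2]

theorem posDef_fin_two_diagonal {c₁ c₂ : ℝ} (hc₁ : 0 < c₁) (hc₂ : 0 < c₂) :
    (!![c₁, 0; 0, c₂] : Matrix (Fin 2) (Fin 2) ℝ).PosDef := by
  have h := (posDef_diagonal_iff (d := ![c₁, c₂])).mpr (by simp [Fin.forall_fin_two, hc₁, hc₂])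
  rwa [diagonal_fin_two] at h

section phi

variable {a b : ℚ}

noncomputable def phiBasis (ha : 0 ≤ a) :
    QuaternionAlgebra.Basis (Matrix (Fin 2) (Fin 2) ℝ) a 0 b where
  i := !![Real.sqrt a, 0; 0, -Real.sqrt a]
  j := !![0, (b : ℝ); 1, 0]
  k := !![0, (b : ℝ) * Real.sqrt a; -Real.sqrt a, 0]
  i_mul_i := by
    have hsa : Real.sqrt a * Real.sqrt a = a := Real.mul_self_sqrt (by exact_mod_cast ha)
    ext i j; fin_cases i <;> fin_cases j <;> simp [hsa, Rat.smul_def]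
  j_mul_j := by ext i j; fin_cases i <;> fin_cases j <;> simp [Rat.smul_def]
  i_mul_j := by ext i j; fin_cases i <;> fin_cases j <;> simp [mul_comm]
  j_mul_i := by ext i j; fin_cases i <;> fin_cases j <;> simp

theorem phi_eq_liftHom (ha : 0 ≤ a) (q : ℍ[ℚ, a, b]) :
    phi a b q = (phiBasis ha).liftHom q := by
  simp [phi, phiBasis, QuaternionAlgebra.Basis.lift, Algebra.algebraMap_eq_smul_one,
    Rat.cast_smul_eq_qsmul]

theorem phi_mul (ha : 0 ≤ a) (q r : ℍ[ℚ, a, b]) : phi a b (q * r) = phi a b q * phi a b r := by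
  simp only [phi_eq_liftHom ha, map_mul]

theorem phi_star (q : ℍ[ℚ, a, b]) : phi a b (star q) = (phi a b q).adjugate := by
  ext i j; fin_cases i <;> fin_cases j <;> simp [phi, adjugate_fin_two] <;> ring

theorem trace_phi (q : ℍ[ℚ, a, b]) : (phi a b q).trace = 2 * q.re := by
  simp only [phi, trace_add, trace_smul, trace_one, Fintype.card_fin, trace_fin_two, smul_eq_mul,
    of_apply, cons_val', cons_val_zero, cons_val_fin_one, cons_val_one, smul_of, smul_cons,
    smul_empty, mul_zero, mul_neg, add_neg_cancel, add_zero, Nat.cast_ofNat]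
  ring

theorem J2_mul_phi_quatJ : J2 * phi a b (quatJ a b) = !![1, 0; 0, -(b : ℝ)] := by
  ext i j; fin_cases i <;> fin_cases j <;> simp [J2, phi, quatJ]

end phi

/-- Set `S := J₂·φ(j) = [[1,0],[0,−b]]`.  Then `S` is symmetric positive definite, and
the symplectic form `E(α,β) = tr(αᵗ·S·β·J₂)` on `M₂(ℝ)` takes only rational values on
the image of `B`: for all `q, r ∈ B` one has `E(φ(q), φ(r)) = tr(φ(j·q·r̄)) ∈ ℚ`,
where `r̄` is the quaternion conjugate of `r`. -/
theorem stmt_17 (a b : ℚ) (ha : 0 < a) (hb : b < 0) :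
    J2 * phi a b (quatJ a b) = !![1, 0; 0, -(b : ℝ)] ∧
    (!![1, 0; 0, -(b : ℝ)] : Matrix (Fin 2) (Fin 2) ℝ).PosDef ∧
    ∀ q r : ℍ[ℚ, a, b],
      ((phi a b q)ᵀ * !![1, 0; 0, -(b : ℝ)] * phi a b r * J2).trace =
        (phi a b (quatJ a b * q * star r)).trace ∧
      ∃ c : ℚ, ((phi a b q)ᵀ * !![1, 0; 0, -(b : ℝ)] * phi a b r * J2).trace = (c : ℝ) := by
  have hS := J2_mul_phi_quatJ (a := a) (b := b)
  refine ⟨hS, posDef_fin_two_diagonal one_pos (by exact_mod_cast neg_pos.mpr hb),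
    fun q r => ?_⟩
  have hSymm : (J2 * phi a b (quatJ a b))ᵀ = J2 * phi a b (quatJ a b) := by
    rw [hS]; ext i j; fin_cases i <;> fin_cases j <;> rfl
  have hE : ((phi a b q)ᵀ * !![1, 0; 0, -(b : ℝ)] * phi a b r * J2).trace =
      (phi a b (quatJ a b * q * star r)).trace := by
    rw [← hS, trace_transpose_mul_J2_mul_mul_J2 hSymm, ← phi_star, ← phi_mul ha.le,
      ← phi_mul ha.le, mul_assoc, phi_mul ha.le (star r), trace_mul_comm, ← phi_mul ha.le]
  exact ⟨hE, 2 * (quatJ a b * q * star r).re, by rw [hE, trace_phi]; push_cast; rfl⟩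
end
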